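/- arXiv:1207.4079 — 2 statements merged into one kernel-verified Lean document; each statement's English description precedes it below -/
import Mathlib

section
/- Correctness of the bypassing operation for Node Unique Label Cover (backward direction): let I be a Node Unique Label Cover instance, v a vertex with φ_v ≠ ∅, and I' the instance obtained by bypassing v. If (X, Ψ) is a solution to I with v ∉ X, then (X, Ψ restricted to V(G) \ {v}) is a solution to I'. -/
open scoped Classical

/-- A binary relation `ψ` on an alphabet is a *partial permutation* if every element has
at most one image and at most one preimage. -/
def IsPartialPerm {σ : Type*} (ψ : σ → σ → Prop) : Prop :=
  (∀ a b c : σ, ψ a b → ψ a c → b = c) ∧ (∀ a b c : σ, ψ a c → ψ b c → a = b)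

/-- `(X, Ψ)` is a solution to a Node Unique Label Cover instance: `|X| ≤ k`, the labels
of undeleted vertices satisfy the vertex constraints `φ`, and the labels of each
undeleted edge satisfy its edge constraint `ψ`. -/
def ULCSol {V σ : Type*} (G : SimpleGraph V) (k : ℕ) (φ : V → Set σ)
    (ψ : V → V → σ → σ → Prop) (X : Set V) (Ψ : V → σ) : Prop :=
  X.ncard ≤ k ∧ (∀ v ∉ X, Ψ v ∈ φ v) ∧
  ∀ u ∉ X, ∀ w ∉ X, G.Adj u w → ψ u w (Ψ u) (Ψ w)

/-- The graph obtained from `G` by bypassing the vertex `v`: `v` becomes isolated and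
any two distinct neighbors of `v` become adjacent. -/
def bypassGraph {V : Type*} (G : SimpleGraph V) (v : V) : SimpleGraph V where
  Adj u w := u ≠ v ∧ w ≠ v ∧ u ≠ w ∧ (G.Adj u w ∨ (G.Adj u v ∧ G.Adj v w))
  symm := ⟨by
    rintro u w ⟨h1, h2, h3, h4⟩
    refine ⟨h2, h1, h3.symm, ?_⟩
    rcases h4 with h | ⟨h5, h6⟩
    · exact Or.inl h.symm
    · exact Or.inr ⟨h6.symm, h5.symm⟩⟩
  loopless := ⟨fun u h => h.2.2.1 rfl⟩

/-- The vertex constraints after bypassing `v`: the bypassed vertex gets no constraint,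
each neighbor `u` of `v` keeps only labels having a `ψ u v`-partner in `φ v`, and
other vertices are unchanged. -/
noncomputable def bypassφ {V σ : Type*} (G : SimpleGraph V) (φ : V → Set σ)
    (ψ : V → V → σ → σ → Prop) (v : V) : V → Set σ := fun u =>
  if u = v then Set.univ
  else if G.Adj u v then φ u ∩ {β | ∃ α ∈ φ v, ψ u v β α}
  else φ u

/-- The edge constraints after bypassing `v`: old constraints are kept, and for each
pair of neighbors of `v` the constraint is additionally intersected with the
composition of the two constraints through `v`. -/
def bypassψ {V σ : Type*} (G : SimpleGraph V) (ψ : V → V → σ → σ → Prop) (v : V) :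
    V → V → σ → σ → Prop := fun u w a c =>
  (G.Adj u w → ψ u w a c) ∧
  ((G.Adj u v ∧ G.Adj v w) → ∃ b : σ, ψ u v a b ∧ ψ v w b c)

/-! The label that `Ψ` gives the undeleted vertex `v` is a common witness: it is the `ψ u v`-partner
in `φ v` required of each neighbor `u`, and the middle label through which the composed constraint
on every new edge between two neighbors of `v` factors. -/

section Bypass

variable {V σ : Type*} {G : SimpleGraph V} {φ : V → Set σ} {ψ : V → V → σ → σ → Prop} {v : V}

theorem mem_bypassφ {u : V} {a b : σ} (ha : a ∈ φ u) (hb : b ∈ φ v)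
    (hab : G.Adj u v → ψ u v a b) : a ∈ bypassφ G φ ψ v u := by
  unfold bypassφ
  split_ifs with huv hadj
  · trivial
  · exact ⟨ha, b, hb, hab hadj⟩
  · exact ha

theorem bypassψ_of_adj_imp {u w : V} {a b c : σ} (hac : G.Adj u w → ψ u w a c)
    (hab : G.Adj u v → ψ u v a b) (hbc : G.Adj v w → ψ v w b c) : bypassψ G ψ v u w a c :=
  ⟨hac, fun ⟨huv, hvw⟩ => ⟨b, hab huv, hbc hvw⟩⟩

end Bypass

theorem bypass_backward_general {V σ : Type*}
    (G : SimpleGraph V) (k : ℕ) (φ : V → Set σ) (ψ : V → V → σ → σ → Prop)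
    (v : V)
    (X : Set V) (Ψ : V → σ) (hvX : v ∉ X)
    (hsol : ULCSol G k φ ψ X Ψ) :
    ULCSol (bypassGraph G v) k (bypassφ G φ ψ v) (bypassψ G ψ v) X Ψ := by
  obtain ⟨hcard, hφ, hψ⟩ := hsol
  refine ⟨hcard, fun u hu => mem_bypassφ (hφ u hu) (hφ v hvX) (hψ u hu v hvX), ?_⟩
  intro u hu w hw _
  exact bypassψ_of_adj_imp (hψ u hu w hw) (hψ u hu v hvX) (hψ v hvX w hw)

/-- Correctness of bypassing (backward direction): if `(X, Ψ)` is a solution of the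
original instance avoiding `v`, then `(X, Ψ)` (restricted to the remaining vertices,
here left intact since `v` is unconstrained after bypassing) is a solution of the
bypassed instance. -/
theorem bypass_backward {V σ : Type*} [Fintype V] [DecidableEq V]
    (G : SimpleGraph V) (k : ℕ) (φ : V → Set σ) (ψ : V → V → σ → σ → Prop)
    (hsymm : ∀ u w a b, ψ u w a b ↔ ψ w u b a)
    (hpp : ∀ u w, G.Adj u w → IsPartialPerm (ψ u w))
    (v : V) (hφv : (φ v).Nonempty)
    (X : Set V) (Ψ : V → σ) (hvX : v ∉ X)
    (hsol : ULCSol G k φ ψ X Ψ) :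
    ULCSol (bypassGraph G v) k (bypassφ G φ ψ v) (bypassψ G ψ v) X Ψ :=
  bypass_backward_general G k φ ψ v X Ψ hvX hsol
end

section
/- Identification of well-connected equivalent terminals preserves the solution set: let (G, T, R, k) be a Node Multiway Cut-Uncut instance and u, v ∈ T two distinct terminals with (u,v) ∈ R such that either uv ∈ E(G) or |N_G(u) ∩ N_G(v)| > k. Let I' be the instance obtained by identifying u and v (replacing them by a single terminal w adjacent to N_G(u) ∪ N_G(v) and updating R accordingly). Then the sets of solutions of I and I' are equal. -/
variable {V : Type*}

/-- The graph `G` with the vertex set `X` (effectively) removed: only edges with both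
endpoints outside `X` are kept, so the vertices of `X` become isolated. -/
def delV (G : SimpleGraph V) (X : Set V) : SimpleGraph V where
  Adj u w := G.Adj u w ∧ u ∉ X ∧ w ∉ X
  symm := ⟨by rintro u w ⟨h, hu, hw⟩; exact ⟨h.symm, hw, hu⟩⟩
  loopless := ⟨by rintro u ⟨h, -, -⟩; exact G.loopless.irrefl u h⟩

/-- `X` is a solution to the Node Multiway Cut-Uncut instance `(G, T, R, k)`:
`X` is a set of at most `k` nonterminal vertices and two terminals lie in the same
connected component of `G \ X` exactly when they are `R`-equivalent. -/
def NMWCUSol (G : SimpleGraph V) (T : Set V) (R : V → V → Prop) (k : ℕ)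
    (X : Set V) : Prop :=
  X ⊆ Tᶜ ∧ X.ncard ≤ k ∧ ∀ u ∈ T, ∀ v ∈ T, ((delV G X).Reachable u v ↔ R u v)

/-- The graph obtained from `G` by identifying the terminal `v` with the terminal `u`:
`v` becomes isolated and `u` additionally receives all remaining neighbors of `v`. -/
def identGraph (G : SimpleGraph V) (u v : V) : SimpleGraph V where
  Adj a b := a ≠ v ∧ b ≠ v ∧ a ≠ b ∧
    (G.Adj a b ∨ (a = u ∧ G.Adj v b) ∨ (b = u ∧ G.Adj a v))
  symm := ⟨by
    rintro a b ⟨h1, h2, h3, h4⟩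
    refine ⟨h2, h1, h3.symm, ?_⟩
    rcases h4 with h | ⟨h5, h6⟩ | ⟨h5, h6⟩
    · exact Or.inl h.symm
    · exact Or.inr (Or.inr ⟨h5, h6.symm⟩)
    · exact Or.inr (Or.inl ⟨h5, h6.symm⟩)⟩
  loopless := ⟨fun a h => h.2.2.1 rfl⟩

/-!
Once `u` and `v` are known to be connected in `G \ X`, identifying them does not change which
vertices are connected in `G \ X`: a path through the merged vertex lifts to a path in `G \ X` by
splicing in a `u`–`v` path. For a solution of the original instance, `u` and `v` are connected
because `R u v`; for a solution of the identified instance, because an edge `uv` or one of the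
more than `k` common neighbours of `u` and `v` survives the deletion of at most `k` vertices.
-/

open SimpleGraph Function

theorem SimpleGraph.Reachable.map_of_adj {W : Type*} {G : SimpleGraph V} {H : SimpleGraph W}
    (f : V → W) (hf : ∀ a b, G.Adj a b → H.Reachable (f a) (f b)) {a b : V}
    (h : G.Reachable a b) : H.Reachable (f a) (f b) := by
  rw [reachable_iff_reflTransGen] at h ⊢
  exact Relation.ReflTransGen.lift' f
    (fun a b hab => (reachable_iff_reflTransGen _ _).1 (hf a b hab)) _ _ h

section Identification

variable {G : SimpleGraph V} {X : Set V} {u v : V}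

theorem delV_identGraph_reachable_update [DecidableEq V] (huv : u ≠ v) (huX : u ∉ X) {a b : V}
    (h : (delV G X).Reachable a b) :
    (delV (identGraph G u v) X).Reachable (update id v u a) (update id v u b) := by
  refine h.map_of_adj _ ?_
  rintro a b ⟨hab, haX, hbX⟩
  simp only [update_apply, id]
  split_ifs with ha hb hb
  · rfl
  · subst ha
    by_cases hbu : b = u
    · rw [hbu]
    · exact Adj.reachable ⟨⟨huv, hb, Ne.symm hbu, .inr (.inl ⟨rfl, hab⟩)⟩, huX, hbX⟩
  · subst hb
    by_cases hau : a = u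
    · rw [hau]
    · exact Adj.reachable ⟨⟨ha, huv, hau, .inr (.inr ⟨rfl, hab⟩)⟩, haX, huX⟩
  · exact Adj.reachable ⟨⟨ha, hb, hab.ne, .inl hab⟩, haX, hbX⟩

theorem delV_reachable_of_delV_identGraph_reachable (hvX : v ∉ X)
    (hreach : (delV G X).Reachable u v) {a b : V}
    (h : (delV (identGraph G u v) X).Reachable a b) : (delV G X).Reachable a b := by
  refine h.map_of_adj id ?_
  rintro a b ⟨⟨-, -, -, hab⟩, haX, hbX⟩
  rcases hab with hab | ⟨rfl, hvb⟩ | ⟨rfl, hav⟩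
  · exact Adj.reachable ⟨hab, haX, hbX⟩
  · exact hreach.trans (Adj.reachable ⟨hvb, hvX, hbX⟩)
  · exact (Adj.reachable (G := delV G X) ⟨hav, haX, hvX⟩).trans hreach.symm

theorem delV_reachable_iff_delV_identGraph_reachable [DecidableEq V] (huv : u ≠ v)
    (huX : u ∉ X) (hvX : v ∉ X) (hreach : (delV G X).Reachable u v) (a b : V) :
    (delV G X).Reachable a b ↔
      (delV (identGraph G u v) X).Reachable (update id v u a) (update id v u b) := by
  have to_update : ∀ c, (delV G X).Reachable c (update id v u c) := by
    intro c
    by_cases hc : c = v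
    · rw [hc, update_self]; exact hreach.symm
    · rw [update_of_ne hc]; rfl
  refine ⟨delV_identGraph_reachable_update huv huX, fun h => ?_⟩
  exact ((to_update a).trans (delV_reachable_of_delV_identGraph_reachable hvX hreach h)).trans
    (to_update b).symm

end Identification

theorem delV_reachable_of_adj_or_lt_ncard_inter {G : SimpleGraph V} {X : Set V} {u v : V} {k : ℕ}
    (hX : X.Finite) (hXk : X.ncard ≤ k) (huX : u ∉ X) (hvX : v ∉ X)
    (hcon : G.Adj u v ∨ k < (G.neighborSet u ∩ G.neighborSet v).ncard) :
    (delV G X).Reachable u v := by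
  rcases hcon with hadj | hcommon
  · exact Adj.reachable ⟨hadj, huX, hvX⟩
  · obtain ⟨w, ⟨huw, hvw⟩, hwX⟩ :=
      Set.exists_mem_notMem_of_ncard_lt_ncard (hXk.trans_lt hcommon) hX
    exact (Adj.reachable (G := delV G X) ⟨huw, huX, hwX⟩).trans
      (Adj.reachable ⟨hvw.symm, hwX, hvX⟩)

theorem rel_iff_rel_of_rel {T : Set V} {R : V → V → Prop}
    (hsym : ∀ s ∈ T, ∀ t ∈ T, R s t → R t s)
    (htrans : ∀ s ∈ T, ∀ t ∈ T, ∀ r ∈ T, R s t → R t r → R s r)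
    {a a' b b' : V} (ha : a ∈ T) (ha' : a' ∈ T) (hb : b ∈ T) (hb' : b' ∈ T)
    (hRa : R a a') (hRb : R b b') : R a b ↔ R a' b' :=
  ⟨fun h => htrans a' ha' a ha b' hb' (hsym a ha a' ha' hRa) (htrans a ha b hb b' hb' h hRb),
    fun h => htrans a ha a' ha' b hb hRa (htrans a' ha' b' hb' b hb h (hsym b hb b' hb' hRb))⟩

theorem nmwcuSol_iff_nmwcuSol_identGraph [DecidableEq V] {G : SimpleGraph V} {T : Set V}
    {R : V → V → Prop} {k : ℕ} {X : Set V}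
    (hrefl : ∀ t ∈ T, R t t)
    (hsym : ∀ s ∈ T, ∀ t ∈ T, R s t → R t s)
    (htrans : ∀ s ∈ T, ∀ t ∈ T, ∀ r ∈ T, R s t → R t r → R s r)
    {u v : V} (hu : u ∈ T) (huv : u ≠ v) (hR : R u v) (huX : u ∉ X) (hvX : v ∉ X)
    (hreach : (delV G X).Reachable u v) :
    NMWCUSol G T R k X ↔ NMWCUSol (identGraph G u v) (T \ {v}) R k X := by
  have reach_iff := delV_reachable_iff_delV_identGraph_reachable huv huX hvX hreach
  have update_mem : ∀ c ∈ T, update id v u c ∈ T \ {v} ∧ R c (update id v u c) := by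
    intro c hc
    by_cases hcv : c = v
    · subst hcv
      exact ⟨by simpa [update_self] using ⟨hu, huv⟩, by simpa using hsym u hu c hc hR⟩
    · simpa [update_of_ne hcv] using ⟨⟨hc, hcv⟩, hrefl c hc⟩
  have hXT : X ⊆ Tᶜ ↔ X ⊆ (T \ {v})ᶜ := by
    rw [Set.compl_sdiff]
    refine ⟨fun h => h.trans Set.subset_union_right, fun h x hx => (h hx).resolve_left ?_⟩
    rintro rfl
    exact hvX hx
  unfold NMWCUSol
  rw [← hXT]
  refine and_congr_right fun _ => and_congr_right fun _ => ⟨fun hsol a ha b hb => ?_,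
    fun hsol a ha b hb => ?_⟩
  · simpa [update_of_ne ha.2, update_of_ne hb.2] using
      (reach_iff a b).symm.trans (hsol a ha.1 b hb.1)
  · obtain ⟨ha', hRa⟩ := update_mem a ha
    obtain ⟨hb', hRb⟩ := update_mem b hb
    exact (reach_iff a b).trans ((hsol _ ha' _ hb').trans
      (rel_iff_rel_of_rel hsym htrans ha ha'.1 hb hb'.1 hRa hRb).symm)

/-- Identification of well-connected `R`-equivalent terminals preserves the solution
set: if terminals `u ≠ v` satisfy `(u,v) ∈ R` and are adjacent or have more than `k`
common neighbors, then the solutions of the original instance are exactly the solutions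
of the instance obtained by identifying `u` and `v` (the identified instance lives on
the vertex set without `v`, i.e. its solutions avoid `v`). -/
theorem identification_preserves_solutions [Fintype V] (G : SimpleGraph V)
    (T : Set V) (R : V → V → Prop) (k : ℕ)
    (hrefl : ∀ t ∈ T, R t t)
    (hsym : ∀ s ∈ T, ∀ t ∈ T, R s t → R t s)
    (htrans : ∀ s ∈ T, ∀ t ∈ T, ∀ r ∈ T, R s t → R t r → R s r)
    (u v : V) (hu : u ∈ T) (hv : v ∈ T) (huv : u ≠ v) (hR : R u v)
    (hcon : G.Adj u v ∨ k < (G.neighborSet u ∩ G.neighborSet v).ncard) :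
    ∀ X : Set V, NMWCUSol G T R k X ↔
      (v ∉ X ∧ NMWCUSol (identGraph G u v) (T \ {v}) R k X) := by
  classical
  intro X
  have solution_iff := nmwcuSol_iff_nmwcuSol_identGraph (G := G) (k := k) (X := X)
    hrefl hsym htrans hu huv hR
  constructor
  · intro hX
    have hvX : v ∉ X := fun h => hX.1 h hv
    exact ⟨hvX, (solution_iff (fun h => hX.1 h hu) hvX ((hX.2.2 u hu v hv).2 hR)).1 hX⟩
  · rintro ⟨hvX, hX⟩
    have huX : u ∉ X := fun h => hX.1 h ⟨hu, huv⟩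
    exact (solution_iff huX hvX
      (delV_reachable_of_adj_or_lt_ncard_inter X.toFinite hX.2.1 huX hvX hcon)).2 hX
end
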